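/- Monotonicity of the depth-indexed distribution-based semantics: if V ⊢ e ⇒ μ₁ within n steps, V ⊢ e ⇒ μ₂ within m steps, and n ≤ m, then μ₁ ≤ μ₂ pointwise as subprobability distributions on value–cost pairs; consequently the pointwise supremum ⟦e⟧_⇒^V := sup{μₙ : V ⊢ e ⇒ μₙ within n steps} = lim_{n→∞} μₙ exists and is a subprobability distribution on value–cost pairs. -/

import Mathlib

set_option maxHeartbeats 1000000

open scoped ENNReal NNRat NNReal
open Classical

noncomputable section

/-! ## Syntax -/

/-- Rational probabilities `p ∈ [0,1]`. -/
abbrev Probability : Type := {p : ℚ≥0 // p ≤ 1}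

/-- Expressions of the probabilistic language in share-let-normal form (Figure 3). -/
inductive Expr : Type where
  | var (x : ℕ)                                          -- variable
  | unit                                                 -- null tuple
  | nil                                                  -- empty list
  | cons (x₁ x₂ : ℕ)                                     -- cons list
  | matL (x : ℕ) (e₀ : Expr) (x₁ x₂ : ℕ) (e₁ : Expr)     -- pattern match
  | fn (f x : ℕ) (e : Expr)                              -- recursive function
  | app (x₁ x₂ : ℕ)                                      -- application
  | tick (q : ℚ≥0)                                       -- cost
  | elet (e₁ : Expr) (x : ℕ) (e₂ : Expr)                 -- definition
  | share (x x₁ x₂ : ℕ) (e : Expr)                       -- sharing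
  | flip (p : Probability) (e₁ e₂ : Expr)                -- coin flip
  | prob (p : Probability)                               -- probability literal
  | flipS (x : ℕ) (e₁ e₂ : Expr)                         -- symbolic flip

/-- Values: unit, lists, probability values and function closures. -/
inductive Val : Type where
  | unit
  | nil
  | cons (v₁ v₂ : Val)
  | prob (p : Probability)
  | clos (V : List (ℕ × Val)) (f x : ℕ) (e : Expr)

/-- Evaluation environments: finite maps from variables to values. -/
abbrev Env : Type := List (ℕ × Val)

/-- Environment lookup `V(x)`. -/
def Env.find : Env → ℕ → Option Val
  | [], _ => none
  | (y, v) :: V, x => if y = x then some v else Env.find V x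

/-! ## Trace-based cost semantics (Figure 5) -/

/-- Outcomes of coin flips. -/
inductive Coin : Type where
  | H
  | T

/-- Trace-based evaluation judgment `V ⊢ e ⇓ v | q` with probability `p` and
trace `σ` (Figure 5). -/
inductive Eval : Env → Expr → Val → ℚ≥0 → ℚ≥0 → List Coin → Prop where
  | var : Env.find V x = some v → Eval V (.var x) v 0 1 []
  | unit : Eval V .unit .unit 0 1 []
  | nil : Eval V .nil .nil 0 1 []
  | cons : Env.find V x₁ = some v₁ → Env.find V x₂ = some v₂ →
      Eval V (.cons x₁ x₂) (.cons v₁ v₂) 0 1 []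
  | matL₁ : Env.find V x = some .nil → Eval V e₀ v q p σ →
      Eval V (.matL x e₀ x₁ x₂ e₁) v q p σ
  | matL₂ : Env.find V x = some (.cons v₁ v₂) →
      Eval ((x₁, v₁) :: (x₂, v₂) :: V) e₁ v q p σ →
      Eval V (.matL x e₀ x₁ x₂ e₁) v q p σ
  | tick : Eval V (.tick q) .unit q 1 []
  | elet : Eval V e₁ v₁ q₁ p₁ σ₁ → Eval ((x, v₁) :: V) e₂ v₂ q₂ p₂ σ₂ →
      Eval V (.elet e₁ x e₂) v₂ (q₁ + q₂) (p₁ * p₂) (σ₁ ++ σ₂)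
  | fn : Eval V (.fn f x e) (.clos V f x e) 0 1 []
  | app : Env.find V x₁ = some (.clos V' f x e) → Env.find V x₂ = some v₂ →
      Eval ((f, .clos V' f x e) :: (x, v₂) :: V') e v q p σ →
      Eval V (.app x₁ x₂) v q p σ
  | flip₁ : Eval V e₁ v₁ q₁ p₁ σ →
      Eval V (.flip p e₁ e₂) v₁ q₁ (p.1 * p₁) (.H :: σ)
  | flip₂ : Eval V e₂ v₂ q₂ p₂ σ →
      Eval V (.flip p e₁ e₂) v₂ q₂ ((1 - p.1) * p₂) (.T :: σ)
  | share : Env.find V x = some v →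
      Eval ((x₁, v) :: (x₂, v) :: V) e v' q p σ →
      Eval V (.share x x₁ x₂ e) v' q p σ
  | prob : Eval V (.prob p) (.prob p) 0 1 []
  | flipS₁ : Env.find V x = some (.prob p) → Eval V e₁ v₁ q₁ p₁ σ →
      Eval V (.flipS x e₁ e₂) v₁ q₁ (p.1 * p₁) (.H :: σ)
  | flipS₂ : Env.find V x = some (.prob p) → Eval V e₂ v₂ q₂ p₂ σ →
      Eval V (.flipS x e₁ e₂) v₂ q₂ ((1 - p.1) * p₂) (.T :: σ)

/-! ## Types and potential (Figure 4) -/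

/-- Types: unit, lists `L(⟨τ, q⟩)`, arrows `⟨τ₁,q₁⟩ → ⟨τ₂,q₂⟩`, and
probability types `prob(q_H, q_T)`. -/
inductive Ty : Type where
  | unit
  | list (τ : Ty) (q : ℚ≥0)
  | arrow (τ₁ : Ty) (q₁ : ℚ≥0) (τ₂ : Ty) (q₂ : ℚ≥0)
  | prob (qH qT : ℚ≥0)

/-- Potential-annotated types `A = ⟨τ, q⟩`. -/
abbrev ATy : Type := Ty × ℚ≥0

/-- The potential function `Φ(v : τ)`. -/
def pot : Val → Ty → ℚ≥0
  | .cons v₁ v₂, .list τ q => (pot v₁ τ + q) + pot v₂ (.list τ q)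
  | .prob p, .prob qH qT => qH * p.1 + qT * (1 - p.1)
  | _, _ => 0

/-- The potential function `Φ(v : A)` for annotated types `A = ⟨τ, q⟩`. -/
def potA (v : Val) (A : ATy) : ℚ≥0 := pot v A.1 + A.2

/-- The value `[v₁, …, vₙ]` corresponding to a Lean list of values. -/
def listVal : List Val → Val
  | [] => .nil
  | v :: vs => .cons v (listVal vs)

/-- The sharing relation `share(τ; τ₁, τ₂)`. -/
inductive Share : Ty → Ty → Ty → Prop where
  | unit : Share .unit .unit .unit
  | list : Share τ τ₁ τ₂ → q = q₁ + q₂ →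
      Share (.list τ q) (.list τ₁ q₁) (.list τ₂ q₂)
  | arrow : Share (.arrow τ₁ q₁ τ₂ q₂) (.arrow τ₁ q₁ τ₂ q₂) (.arrow τ₁ q₁ τ₂ q₂)
  | prob : qH = qH₁ + qH₂ → qT = qT₁ + qT₂ →
      Share (.prob qH qT) (.prob qH₁ qT₁) (.prob qH₂ qT₂)

/-- Sharing for annotated types: `share(⟨τ,q⟩; ⟨τ₁,q₁⟩, ⟨τ₂,q₂⟩)`. -/
def ShareA (A A₁ A₂ : ATy) : Prop := Share A.1 A₁.1 A₂.1 ∧ A.2 = A₁.2 + A₂.2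

/-- Potential scaling `p × τ`. -/
def scaleTy (p : ℚ≥0) : Ty → Ty
  | .unit => .unit
  | .list τ q => .list (scaleTy p τ) (p * q)
  | .arrow τ₁ q₁ τ₂ q₂ => .arrow τ₁ q₁ τ₂ q₂
  | .prob qH qT => .prob (p * qH) (p * qT)

/-- Potential scaling `p × A` for annotated types. -/
def scaleA (p : ℚ≥0) (A : ATy) : ATy := (scaleTy p A.1, p * A.2)

/-- Typing contexts. -/
abbrev Ctx : Type := List (ℕ × Ty)

/-- Scaling of typing contexts `p × Γ`. -/
def scaleCtx (p : ℚ≥0) (Γ : Ctx) : Ctx := Γ.map fun xt => (xt.1, scaleTy p xt.2)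

/-- Zeroing of potential annotations `|τ|`. -/
def zeroTy : Ty → Ty
  | .unit => .unit
  | .list τ _ => .list (zeroTy τ) 0
  | .arrow τ₁ q₁ τ₂ q₂ => .arrow τ₁ q₁ τ₂ q₂
  | .prob _ _ => .prob 0 0

/-- Zeroing of contexts `|Γ|`. -/
def zeroCtx (Γ : Ctx) : Ctx := Γ.map fun xt => (xt.1, zeroTy xt.2)

/-- The sharing relation lifted pointwise to typing contexts. -/
inductive ShareCtx : Ctx → Ctx → Ctx → Prop where
  | nil : ShareCtx [] [] []
  | cons : Share τ τ₁ τ₂ → ShareCtx Γ Γ₁ Γ₂ →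
      ShareCtx ((x, τ) :: Γ) ((x, τ₁) :: Γ₁) ((x, τ₂) :: Γ₂)

/-- Subtyping `τ <: τ'`. -/
inductive SubTy : Ty → Ty → Prop where
  | unit : SubTy .unit .unit
  | list : SubTy τ₁ τ₂ → q₁ ≥ q₂ → SubTy (.list τ₁ q₁) (.list τ₂ q₂)
  | arrow : SubTy τ₂ τ₁ → q₂ ≥ q₁ → SubTy σ₁ σ₂ → p₁ ≥ p₂ →
      SubTy (.arrow τ₁ q₁ σ₁ p₁) (.arrow τ₂ q₂ σ₂ p₂)
  | prob : qH₁ ≥ qH₂ → qT₁ ≥ qT₂ → SubTy (.prob qH₁ qT₁) (.prob qH₂ qT₂)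

/-! ## The affine typing judgment (Figure 6) -/

/-- The typing judgment `Γ; q ⊢ e : A` of Figure 6. -/
inductive Typing : Ctx → ℚ≥0 → Expr → ATy → Prop where
  | var : Typing [(x, τ)] 0 (.var x) (τ, 0)
  | unit : Typing [] 0 .unit (.unit, 0)
  | nil : Typing [] 0 .nil (.list τ p, 0)
  | cons : Typing [(x₁, τ), (x₂, .list τ p)] p (.cons x₁ x₂) (.list τ p, 0)
  | matL : Typing Γ q e₀ B →
      Typing ((x₁, τ) :: (x₂, .list τ p) :: Γ) (q + p) e₁ B →
      Typing ((x, .list τ p) :: Γ) q (.matL x e₀ x₁ x₂ e₁) B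
  | tick : Typing [] q (.tick q) (.unit, 0)
  | elet : Typing Γ₁ q e₁ (τ, p) → Typing ((x, τ) :: Γ₂) p e₂ B →
      Typing (Γ₁ ++ Γ₂) q (.elet e₁ x e₂) B
  | app : Typing [(x₁, .arrow τ q σ p), (x₂, τ)] q (.app x₁ x₂) (σ, p)
  | fn : zeroCtx Γ = Γ →
      Typing ((f, .arrow τ q σ p) :: (x, τ) :: Γ) q e (σ, p) →
      Typing Γ 0 (.fn f x e) (.arrow τ q σ p, 0)
  | share : Share τ τ₁ τ₂ →
      Typing ((x₁, τ₁) :: (x₂, τ₂) :: Γ) q e B →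
      Typing ((x, τ) :: Γ) q (.share x x₁ x₂ e) B
  | flip : ShareCtx Γ (scaleCtx p.1 Γ₁) (scaleCtx (1 - p.1) Γ₂) →
      q = p.1 * q₁ + (1 - p.1) * q₂ →
      Typing Γ₁ q₁ e₁ A → Typing Γ₂ q₂ e₂ A →
      Typing Γ q (.flip p e₁ e₂) A
  | prob : q = p.1 * qH + (1 - p.1) * qT →
      Typing [] q (.prob p) (.prob qH qT, 0)
  | flipS : Typing Γ (q + qH) e₁ A → Typing Γ (q + qT) e₂ A →
      Typing ((x, .prob qH qT) :: Γ) q (.flipS x e₁ e₂) A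
  | sub : Typing Γ q e (τ', q') → SubTy τ' τ → Typing Γ q e (τ, q')
  | sup : Typing ((x, τ) :: Γ) q e B → SubTy τ' τ → Typing ((x, τ') :: Γ) q e B
  | weak : Typing Γ q e B → Typing ((x, τ) :: Γ) q e B
  | relax : ∀ {Γ : Ctx} {p q p' q' : ℚ≥0} {τ : Ty} {e : Expr},
      Typing Γ p e (τ, p') → p ≤ q → (p : ℚ) - (p' : ℚ) ≤ (q : ℚ) - (q' : ℚ) →
      Typing Γ q e (τ, q')
  | exch : Typing Γ q e B → Γ.Perm Γ' → Typing Γ' q e B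

/-! ## Value and environment typing (Figure 8) -/

mutual
  /-- The value typing judgment `v : τ` (Figure 8); it ignores potential
  annotations. -/
  inductive VTy : Val → Ty → Prop where
    | unit : VTy .unit .unit
    | prob : VTy (.prob p) (.prob qH qT)
    | nil : VTy .nil (.list τ q)
    | cons : VTy v₁ τ → VTy v₂ (.list τ q) → VTy (.cons v₁ v₂) (.list τ q)
    | clos : EnvTy V Γ →
        Typing ((f, .arrow τ q σ p) :: (x, τ) :: zeroCtx Γ) q e (σ, p) →
        VTy (.clos V f x e) (.arrow τ q σ p)

  /-- `V : Γ` : the environment `V` has typing context `Γ`. -/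
  inductive EnvTy : Env → Ctx → Prop where
    | nil : EnvTy V []
    | cons : Env.find V x = some v → VTy v τ → EnvTy V Γ → EnvTy V ((x, τ) :: Γ)
end

/-- The potential `Φ(V : Γ)` of an environment with respect to a context. -/
def potCtx (V : Env) (Γ : Ctx) : ℚ≥0 :=
  (Γ.map fun xt => ((Env.find V xt.1).map fun v => pot v xt.2).getD 0).sum

/-! ## Distribution-based cost semantics (Figure 7) -/

/-- Embedding of nonnegative rationals into `ℝ≥0∞`. -/
def qe (q : ℚ≥0) : ℝ≥0∞ := ((q : ℝ≥0) : ℝ≥0∞)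

/-- The point distribution `δ(a)`. -/
def dirac {α : Type*} (a : α) : α → ℝ≥0∞ := fun b => if b = a then 1 else 0

/-- Subprobability distributions on value–cost pairs. -/
abbrev SubDist : Type := Val × ℚ≥0 → ℝ≥0∞

/-- Monadic composition used in rule DE:Let: costs are added. -/
def letBind (μ : SubDist) (κ : Val × ℚ≥0 → SubDist) : SubDist := fun b =>
  ∑' a₁ : Val × ℚ≥0, ∑' a₂ : Val × ℚ≥0,
    μ a₁ * κ a₁ a₂ * dirac (a₂.1, a₁.2 + a₂.2) b

/-- Depth-indexed distribution-based evaluation judgment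
`V ⊢ e ⇒ μ` within `n` steps (Figure 7). -/
inductive Step : Env → Expr → SubDist → ℕ → Prop where
  | base : Step V e (fun _ => 0) 0
  | var : 0 < n → Env.find V x = some v → Step V (.var x) (dirac (v, 0)) n
  | unit : 0 < n → Step V .unit (dirac (.unit, 0)) n
  | nil : 0 < n → Step V .nil (dirac (.nil, 0)) n
  | cons : 0 < n → Env.find V x₁ = some v₁ → Env.find V x₂ = some v₂ →
      Step V (.cons x₁ x₂) (dirac (.cons v₁ v₂, 0)) n
  | matL₁ : Env.find V x = some .nil → Step V e₀ μ n →
      Step V (.matL x e₀ x₁ x₂ e₁) μ (n + 1)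
  | matL₂ : Env.find V x = some (.cons v₁ v₂) →
      Step ((x₁, v₁) :: (x₂, v₂) :: V) e₁ μ n →
      Step V (.matL x e₀ x₁ x₂ e₁) μ (n + 1)
  | tick : 0 < n → Step V (.tick q) (dirac (.unit, q)) n
  | fn : 0 < n → Step V (.fn f x e) (dirac (.clos V f x e, 0)) n
  | app : Env.find V x₁ = some (.clos V' f x e) → Env.find V x₂ = some v₂ →
      Step ((f, .clos V' f x e) :: (x, v₂) :: V') e μ n →
      Step V (.app x₁ x₂) μ (n + 1)
  | elet : Step V e₁ μ n →
      (∀ a : Val × ℚ≥0, μ a ≠ 0 → Step ((x, a.1) :: V) e₂ (κ a) n) →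
      Step V (.elet e₁ x e₂) (letBind μ κ) (n + 1)
  | share : Env.find V x = some v →
      Step ((x₁, v) :: (x₂, v) :: V) e μ n →
      Step V (.share x x₁ x₂ e) μ (n + 1)
  | flip : Step V e₁ μ₁ n → Step V e₂ μ₂ n →
      Step V (.flip p e₁ e₂) (fun a => qe p.1 * μ₁ a + qe (1 - p.1) * μ₂ a) (n + 1)
  | prob : 0 < n → Step V (.prob p) (dirac (.prob p, 0)) n
  | flipS : Env.find V x = some (.prob p) → Step V e₁ μ₁ n → Step V e₂ μ₂ n →
      Step V (.flipS x e₁ e₂) (fun a => qe p.1 * μ₁ a + qe (1 - p.1) * μ₂ a) (n + 1)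

/-- `⟦e⟧_⇒^V`: the pointwise supremum of all distributions derivable in the
depth-indexed distribution-based semantics. -/
def dsem (V : Env) (e : Expr) : SubDist := fun a =>
  ⨆ (n : ℕ) (μ : SubDist) (_ : Step V e μ n), μ a

/-- `⟦e⟧_⇓^V(v, q) = Σ_σ p_σ`, summing the probabilities of all finite traces
with which `e` evaluates to `v` with cost `q`. -/
def tsem (V : Env) (e : Expr) : SubDist := fun a =>
  ∑' σ : List Coin, ⨆ (p : ℚ≥0) (_ : Eval V e a.1 a.2 p σ), qe p

/-- `νₙ`: the restriction of `⟦e⟧_⇓^V` to traces of length at most `n`. -/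
def tsemN (V : Env) (e : Expr) (n : ℕ) : SubDist := fun a =>
  ∑' σ : List Coin,
    if σ.length ≤ n then ⨆ (p : ℚ≥0) (_ : Eval V e a.1 a.2 p σ), qe p else 0

end

/-!
Monotonicity is proved by induction on the shallower derivation. Environment lookup is
deterministic, so the deeper derivation ends in the same rule with premises about the same
subterms and environments, and every rule builds its distribution monotonically from those of
its premises; at depth `0` the zero distribution lies below everything. Point masses, the
cost-adding bind and convex combinations keep total mass at most `1`, so every derivable
distribution is a subprobability distribution. By monotonicity the derivable distributions form
a directed family, and the total mass of a directed supremum is the supremum of the total masses.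
-/

theorem ENNReal.tsum_iSup_of_directed {α ι : Type*} {f : ι → α → ℝ≥0∞}
    (hf : Directed (· ≤ ·) f) : ∑' a, ⨆ i, f i a = ⨆ i, ∑' a, f i a := by
  refine le_antisymm ?_ (iSup_le fun i => ENNReal.tsum_le_tsum fun a => le_iSup (f · a) i)
  rw [ENNReal.tsum_eq_iSup_sum]
  refine iSup_le fun s => ?_
  rw [ENNReal.finsetSum_iSup fun i j => (hf i j).imp fun k hk a => ⟨hk.1 a, hk.2 a⟩]
  exact iSup_mono fun i => ENNReal.sum_le_tsum s

theorem tsum_dirac {α : Type*} (a : α) : ∑' b, dirac a b = 1 :=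
  tsum_ite_eq a (fun _ => 1)

theorem qe_add_qe_one_sub (p : Probability) : qe p.1 + qe (1 - p.1) = 1 := by
  simp only [qe, ← ENNReal.coe_add, ← NNRat.cast_add, add_tsub_cancel_of_le p.2]
  simp

theorem tsum_convex_le_one {α : Type*} (p : Probability) {μ₁ μ₂ : α → ℝ≥0∞}
    (h₁ : ∑' a, μ₁ a ≤ 1) (h₂ : ∑' a, μ₂ a ≤ 1) :
    ∑' a, (qe p.1 * μ₁ a + qe (1 - p.1) * μ₂ a) ≤ 1 := by
  rw [ENNReal.tsum_add, ENNReal.tsum_mul_left, ENNReal.tsum_mul_left, ← qe_add_qe_one_sub p]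
  gcongr <;> exact mul_le_of_le_one_right' ‹_›

section letBind

variable {μ μ' : SubDist} {κ κ' : Val × ℚ≥0 → SubDist}

theorem letBind_mono (hμ : μ ≤ μ') (hκ : ∀ a, μ a ≠ 0 → κ a ≤ κ' a) :
    letBind μ κ ≤ letBind μ' κ' := by
  intro b
  refine ENNReal.tsum_le_tsum fun a₁ => ENNReal.tsum_le_tsum fun a₂ => ?_
  by_cases h : μ a₁ = 0
  · simp [h]
  · gcongr
    exacts [hμ a₁, hκ a₁ h a₂]

theorem tsum_letBind (μ : SubDist) (κ : Val × ℚ≥0 → SubDist) :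
    ∑' b, letBind μ κ b = ∑' a, μ a * ∑' b, κ a b := by
  simp only [letBind]
  rw [ENNReal.tsum_comm]
  refine tsum_congr fun a₁ => ?_
  rw [ENNReal.tsum_comm, ← ENNReal.tsum_mul_left]
  refine tsum_congr fun a₂ => ?_
  rw [ENNReal.tsum_mul_left, tsum_dirac, mul_one]

theorem tsum_letBind_le_one (hμ : ∑' a, μ a ≤ 1) (hκ : ∀ a, μ a ≠ 0 → ∑' b, κ a b ≤ 1) :
    ∑' b, letBind μ κ b ≤ 1 := by
  rw [tsum_letBind]
  refine le_trans (ENNReal.tsum_le_tsum fun a => ?_) hμ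
  by_cases h : μ a = 0
  · simp [h]
  · exact mul_le_of_le_one_right' (hκ a h)

end letBind

namespace Step

variable {V : Env} {e : Expr} {μ₁ μ₂ : SubDist} {n m : ℕ}

theorem mono (h₁ : Step V e μ₁ n) (h₂ : Step V e μ₂ m) (hnm : n ≤ m) : μ₁ ≤ μ₂ := by
  induction h₁ generalizing μ₂ m with
  | base => exact fun _ => zero_le
  | matL₁ hx _ ih =>
    cases h₂ with
    | base => omega
    | matL₁ _ h => exact ih h (by omega)
    | matL₂ hx' _ => cases hx.symm.trans hx'
  | matL₂ hx _ ih =>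
    cases h₂ with
    | base => omega
    | matL₁ hx' _ => cases hx.symm.trans hx'
    | matL₂ hx' h => cases hx.symm.trans hx'; exact ih h (by omega)
  | app hf ha _ ih =>
    cases h₂ with
    | base => omega
    | app hf' ha' h =>
      cases hf.symm.trans hf'; cases ha.symm.trans ha'; exact ih h (by omega)
  | share hx _ ih =>
    cases h₂ with
    | base => omega
    | share hx' h => cases hx.symm.trans hx'; exact ih h (by omega)
  | elet _ _ ih ihκ =>
    cases h₂ with
    | base => omega
    | elet h hκ =>
      have hμ := ih h (by omega)
      exact letBind_mono hμ fun a ha =>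
        ihκ a ha (hκ a (ne_bot_of_le_ne_bot ha (hμ a))) (by omega)
  | flip _ _ ih₁ ih₂ =>
    cases h₂ with
    | base => omega
    | flip h₁ h₂ =>
      exact fun a => by dsimp only; gcongr; exacts [ih₁ h₁ (by omega) a, ih₂ h₂ (by omega) a]
  | flipS hx _ _ ih₁ ih₂ =>
    cases h₂ with
    | base => omega
    | flipS hx' h₁ h₂ =>
      cases hx.symm.trans hx'
      exact fun a => by dsimp only; gcongr; exacts [ih₁ h₁ (by omega) a, ih₂ h₂ (by omega) a]
  | _ => cases h₂ <;> simp_all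

theorem tsum_le_one (h : Step V e μ₁ n) : ∑' a, μ₁ a ≤ 1 := by
  induction h with
  | base => simp
  | elet _ _ ih ihκ => exact tsum_letBind_le_one ih ihκ
  | flip _ _ ih₁ ih₂ | flipS _ _ _ ih₁ ih₂ => exact tsum_convex_le_one _ ih₁ ih₂
  | matL₁ _ _ ih | matL₂ _ _ ih | app _ _ _ ih | share _ _ ih => exact ih
  | _ => exact (tsum_dirac _).le

theorem le_dsem (h : Step V e μ₁ n) : μ₁ ≤ dsem V e :=
  fun _ => le_iSup₂_of_le n μ₁ (le_iSup_of_le h le_rfl)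

end Step

theorem dsem_le {V : Env} {e : Expr} {ν : SubDist} (hν : ∀ n μ, Step V e μ n → μ ≤ ν) :
    dsem V e ≤ ν :=
  fun a => iSup₂_le fun n μ => iSup_le fun h => hν n μ h a

theorem dsem_eq_iSup (V : Env) (e : Expr) :
    dsem V e = fun a => ⨆ μ : Σ n, {μ // Step V e μ n}, μ.2.1 a := by
  ext a
  simp only [dsem, iSup_sigma, iSup_subtype]

theorem directed_step (V : Env) (e : Expr) :
    Directed (· ≤ ·) fun μ : Σ n, {μ // Step V e μ n} => μ.2.1 := by
  intro μ ν
  rcases le_total μ.1 ν.1 with h | h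
  · exact ⟨ν, μ.2.2.mono ν.2.2 h, le_rfl⟩
  · exact ⟨μ, le_rfl, ν.2.2.mono μ.2.2 h⟩

theorem tsum_dsem_le_one (V : Env) (e : Expr) : ∑' a, dsem V e a ≤ 1 := by
  rw [dsem_eq_iSup, ENNReal.tsum_iSup_of_directed (directed_step V e)]
  exact iSup_le fun μ => μ.2.2.tsum_le_one

/-- **Monotonicity of the depth-indexed distribution-based semantics**
(Lemma 5.1): if `V ⊢ e ⇒ μ₁` within `n` steps, `V ⊢ e ⇒ μ₂` within `m` steps,
and `n ≤ m`, then `μ₁ ≤ μ₂` pointwise; consequently the pointwise supremum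
`⟦e⟧_⇒^V = sup{μₙ : V ⊢ e ⇒ μₙ within n steps}` exists (it is the pointwise
least upper bound of the derivable distributions) and is a subprobability
distribution on value–cost pairs. -/
theorem step_monotone_and_dsem_subprob :
    (∀ (V : Env) (e : Expr) (n m : ℕ) (μ₁ μ₂ : SubDist),
        Step V e μ₁ n → Step V e μ₂ m → n ≤ m → ∀ a, μ₁ a ≤ μ₂ a) ∧
    (∀ (V : Env) (e : Expr),
        (∀ (n : ℕ) (μ : SubDist), Step V e μ n → ∀ a, μ a ≤ dsem V e a) ∧
        (∀ ν : SubDist, (∀ (n : ℕ) (μ : SubDist), Step V e μ n → ∀ a, μ a ≤ ν a) →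
            ∀ a, dsem V e a ≤ ν a) ∧
        ∑' a : Val × ℚ≥0, dsem V e a ≤ 1) :=
  ⟨fun _ _ _ _ _ _ h₁ h₂ hnm => h₁.mono h₂ hnm,
    fun V e => ⟨fun _ _ h => h.le_dsem, fun _ hν => dsem_le hν, tsum_dsem_le_one V e⟩⟩
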